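/- arXiv:2105.12539 — 2 statements merged into one kernel-verified Lean document; each statement's English description precedes it below -/
import Mathlib

section
/- Let X be a chain (X_0,...,X_ζ) in ℝ^d with exchangeable increments, ζ ∈ ℕ, and let η ∈ ℝ^d \ {0}. Define Z_i = ⟨X_i, η⟩, let τ be the last index at which Z attains its minimum, and define the post-minimum chain →X_i = X_{τ+i} − X_τ (for i ≤ ζ−τ) and reversed pre-minimum chain ←X_i = X_{τ−i} − X_τ (for i ≤ τ). Define A⁺_i = #{j ≤ i : Z_j > 0}, A⁻_i = #{j ≤ i : Z_j ≤ 0}, with right inverses α±, and the rearranged chains X↑_i = Σ_{j ≤ α⁺_i} 1{Z_j>0} (X_j − X_{j−1}) for i ≤ A⁺_ζ and X↓_i = Σ_{j ≤ α⁻_i} 1{Z_j≤0} (X_j − X_{j−1}) for i ≤ A⁻_ζ (both equal to a cemetery state † beyond their lifetimes). Then the pair (X↓, X↑) has the same law as (−←X, →X). -/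
open MeasureTheory Matrix
open scoped Classical

noncomputable section

/-- The coproduct measurable space on `Option α` (the cemetery state `†` is `none`). -/
instance optionMeasurableSpace {α : Type*} [m : MeasurableSpace α] :
    MeasurableSpace (Option α) := m.map some

variable {d : ℕ}

/-- The projected chain `Z_i = ⟨x_i, η⟩`. -/
def projZ (η : Fin d → ℝ) (x : ℕ → Fin d → ℝ) (i : ℕ) : ℝ := x i ⬝ᵥ η

/-- The last index `τ` in `{0, …, ζ}` at which `Z` attains its minimum. -/
def lastArgmin (η : Fin d → ℝ) (ζ : ℕ) (x : ℕ → Fin d → ℝ) : ℕ :=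
  sSup {i | i ≤ ζ ∧ ∀ j ≤ ζ, projZ η x i ≤ projZ η x j}

/-- The post-minimum chain `→X_i = X_{τ+i} - X_τ` for `i ≤ ζ - τ`, cemetery afterwards. -/
def postChain (η : Fin d → ℝ) (ζ : ℕ) (x : ℕ → Fin d → ℝ) (i : ℕ) : Option (Fin d → ℝ) :=
  if i ≤ ζ - lastArgmin η ζ x then
    some (x (lastArgmin η ζ x + i) - x (lastArgmin η ζ x))
  else none

/-- The reversed pre-minimum chain `←X_i = X_{τ-i} - X_τ` for `i ≤ τ`, cemetery afterwards. -/
def preChain (η : Fin d → ℝ) (ζ : ℕ) (x : ℕ → Fin d → ℝ) (i : ℕ) : Option (Fin d → ℝ) :=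
  if i ≤ lastArgmin η ζ x then
    some (x (lastArgmin η ζ x - i) - x (lastArgmin η ζ x))
  else none

/-- `A⁺_i = #{j ∈ {1,…,i} : Z_j > 0}`. -/
def Apl (η : Fin d → ℝ) (x : ℕ → Fin d → ℝ) (i : ℕ) : ℕ :=
  ((Finset.Icc 1 i).filter fun j => 0 < projZ η x j).card

/-- `A⁻_i = #{j ∈ {1,…,i} : Z_j ≤ 0}`. -/
def Ami (η : Fin d → ℝ) (x : ℕ → Fin d → ℝ) (i : ℕ) : ℕ :=
  ((Finset.Icc 1 i).filter fun j => projZ η x j ≤ 0).card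

/-- Right inverse `α⁺_i = inf{j : A⁺_j = i}`. -/
def alphaPl (η : Fin d → ℝ) (x : ℕ → Fin d → ℝ) (i : ℕ) : ℕ := sInf {j | Apl η x j = i}

/-- Right inverse `α⁻_i = inf{j : A⁻_j = i}`. -/
def alphaMi (η : Fin d → ℝ) (x : ℕ → Fin d → ℝ) (i : ℕ) : ℕ := sInf {j | Ami η x j = i}

/-- The rearranged chain `X↑_i = Σ_{j ≤ α⁺_i} 1{Z_j > 0}(X_j - X_{j-1})` for `i ≤ A⁺_ζ`. -/
def upChain (η : Fin d → ℝ) (ζ : ℕ) (x : ℕ → Fin d → ℝ) (i : ℕ) : Option (Fin d → ℝ) :=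
  if i ≤ Apl η x ζ then
    some (∑ j ∈ Finset.Icc 1 (alphaPl η x i),
      if 0 < projZ η x j then x j - x (j - 1) else 0)
  else none

/-- The rearranged chain `X↓_i = Σ_{j ≤ α⁻_i} 1{Z_j ≤ 0}(X_j - X_{j-1})` for `i ≤ A⁻_ζ`. -/
def downChain (η : Fin d → ℝ) (ζ : ℕ) (x : ℕ → Fin d → ℝ) (i : ℕ) : Option (Fin d → ℝ) :=
  if i ≤ Ami η x ζ then
    some (∑ j ∈ Finset.Icc 1 (alphaMi η x i),
      if projZ η x j ≤ 0 then x j - x (j - 1) else 0)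
  else none

/-!
Put first the increments of the steps ending with `Z ≤ 0`, in reverse order, and then those
ending with `Z > 0`, in their order. The resulting chain attains its last minimum at time
`A⁻_ζ`, and its reversed pre-minimum and post-minimum chains are `-X↓` and `X↑`, pathwise.
This rearrangement of the increments `δ` is a permutation `σ δ` that can be read off the
rearranged sequence `δ ∘ σ δ` (the chain `X` is recovered by merging the two halves in the
only way consistent with the signs). Hence for every `δ` the map `π ↦ π * σ (δ ∘ π)` is a
bijection of the symmetric group, and averaging over `π` shows that, for exchangeable
increments, `δ ∘ σ δ` has the same law as `δ`.
-/

section Counting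

variable (P : ℕ → Prop) [DecidablePred P]

def countTo (n : ℕ) : ℕ := ((Finset.Icc 1 n).filter P).card

/-- `Apl`, `Ami`, `alphaPl`, `alphaMi` are `countTo` and `countInv` for the two sign predicates;
`countInv P i = 0` when the count never reaches `i`. -/
def countInv (i : ℕ) : ℕ := sInf {j | countTo P j = i}

variable {P} {Q : ℕ → Prop} [DecidablePred Q]

lemma countTo_zero : countTo P 0 = 0 := by simp [countTo]

lemma countTo_succ (n : ℕ) : countTo P (n + 1) = countTo P n + if P (n + 1) then 1 else 0 := by
  unfold countTo
  rw [← Finset.insert_Icc_right_eq_Icc_add_one (by omega : 1 ≤ n + 1), Finset.filter_insert]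
  split_ifs
  · rw [Finset.card_insert_of_notMem (by simp)]
  · rfl

lemma countTo_mono : Monotone (countTo P) := fun _ _ hab =>
  Finset.card_le_card (Finset.filter_subset_filter _ (Finset.Icc_subset_Icc le_rfl hab))

lemma countTo_le (n : ℕ) : countTo P n ≤ n :=
  (Finset.card_filter_le _ _).trans (by simp)

lemma countTo_add_countTo_of_iff_not (hQ : ∀ j, Q j ↔ ¬ P j) (n : ℕ) :
    countTo P n + countTo Q n = n := by
  induction n with
  | zero => simp [countTo_zero]
  | succ n ih =>
    rw [countTo_succ, countTo_succ]
    by_cases hP : P (n + 1) <;> simp [hP, hQ] <;> omega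

lemma countTo_congr {n : ℕ} (h : ∀ j, 1 ≤ j → j ≤ n → (P j ↔ Q j)) :
    countTo P n = countTo Q n :=
  congrArg Finset.card (Finset.filter_congr fun j hj =>
    h j (Finset.mem_Icc.1 hj).1 (Finset.mem_Icc.1 hj).2)

lemma exists_countTo_eq {i n : ℕ} (h : i ≤ countTo P n) : ∃ j ≤ n, countTo P j = i := by
  induction n with
  | zero => exact ⟨0, le_rfl, by rw [countTo_zero] at h ⊢; omega⟩
  | succ n ih =>
    by_cases hi : i ≤ countTo P n
    · obtain ⟨j, hj, hji⟩ := ih hi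
      exact ⟨j, by omega, hji⟩
    · have := countTo_succ (P := P) n
      exact ⟨n + 1, le_rfl, by split_ifs at this <;> omega⟩

lemma countTo_countInv {i n : ℕ} (h : i ≤ countTo P n) : countTo P (countInv P i) = i :=
  have ⟨_, _, hj⟩ := exists_countTo_eq h
  Nat.sInf_mem (s := {j | countTo P j = i}) ⟨_, hj⟩

lemma countInv_le {i n : ℕ} (h : i ≤ countTo P n) : countInv P i ≤ n :=
  have ⟨_, hjn, hj⟩ := exists_countTo_eq h
  (Nat.sInf_le (s := {j | countTo P j = i}) hj).trans hjn

lemma one_le_countInv {i n : ℕ} (hi : 1 ≤ i) (h : i ≤ countTo P n) : 1 ≤ countInv P i := by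
  have hc := countTo_countInv h
  by_contra h0
  rw [show countInv P i = 0 by omega, countTo_zero] at hc
  omega

lemma countInv_mem {i n : ℕ} (hi : 1 ≤ i) (h : i ≤ countTo P n) : P (countInv P i) := by
  have hm := one_le_countInv hi h
  have hc := countTo_countInv h
  have hprev : countTo P (countInv P i - 1) ≠ i := fun heq =>
    (Nat.sInf_le (s := {j | countTo P j = i}) heq).not_gt
      (show countInv P i - 1 < countInv P i by omega)
  have hstep := countTo_succ (P := P) (countInv P i - 1)
  rw [Nat.sub_add_cancel hm] at hstep
  by_contra hP
  rw [if_neg hP] at hstep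
  omega

lemma countInv_countTo {m : ℕ} (h1 : 1 ≤ m) (hm : P m) : countInv P (countTo P m) = m := by
  refine le_antisymm (Nat.sInf_le (s := {j | countTo P j = countTo P m}) rfl)
    (by_contra fun hlt => ?_)
  have hmem : countTo P (countInv P (countTo P m)) = countTo P m :=
    Nat.sInf_mem (s := {j | countTo P j = countTo P m}) ⟨m, rfl⟩
  have hstep := countTo_succ (P := P) (m - 1)
  rw [Nat.sub_add_cancel h1, if_pos hm] at hstep
  have := countTo_mono (P := P) (show countInv P (countTo P m) ≤ m - 1 by omega)
  omega

lemma sum_Icc_ite_eq_sum_countInv {M : Type*} [AddCommMonoid M] (f : ℕ → M) (m : ℕ) :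
    ∑ j ∈ Finset.Icc 1 m, (if P j then f j else 0)
      = ∑ l ∈ Finset.Icc 1 (countTo P m), f (countInv P l) := by
  induction m with
  | zero => simp [countTo_zero]
  | succ m ih =>
    rw [Finset.sum_Icc_succ_top (by omega), ih]
    by_cases hP : P (m + 1)
    · have hc : countTo P (m + 1) = countTo P m + 1 := by rw [countTo_succ, if_pos hP]
      rw [if_pos hP, hc, Finset.sum_Icc_succ_top (by omega), ← hc, countInv_countTo (by omega) hP]
    · rw [if_neg hP, add_zero, countTo_succ, if_neg hP, add_zero]

lemma countInv_congr {n i : ℕ} (h : ∀ j ≤ n, countTo P j = countTo Q j)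
    (hi : i ≤ countTo P n) : countInv P i = countInv Q i := by
  have hi' : i ≤ countTo Q n := h n le_rfl ▸ hi
  apply le_antisymm
  · exact Nat.sInf_le (show countTo P (countInv Q i) = i by
      rw [h _ (countInv_le hi'), countTo_countInv hi'])
  · exact Nat.sInf_le (show countTo Q (countInv P i) = i by
      rw [← h _ (countInv_le hi), countTo_countInv hi])

lemma sum_Icc_countInv_ite_congr {M : Type*} [AddCommMonoid M] {f g : ℕ → M} {n i : ℕ}
    (hPQ : ∀ j, 1 ≤ j → j ≤ n → (P j ↔ Q j)) (hfg : ∀ j, 1 ≤ j → j ≤ n → f j = g j)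
    (hi : i ≤ countTo P n) :
    ∑ j ∈ Finset.Icc 1 (countInv P i), (if P j then f j else 0)
      = ∑ j ∈ Finset.Icc 1 (countInv Q i), (if Q j then g j else 0) := by
  rw [← countInv_congr (fun j hj => countTo_congr fun m h1 h2 => hPQ m h1 (h2.trans hj)) hi]
  refine Finset.sum_congr rfl fun j hj => ?_
  obtain ⟨h1, h2⟩ := Finset.mem_Icc.1 hj
  have hjn := h2.trans (countInv_le hi)
  by_cases hP : P j
  · rw [if_pos hP, if_pos ((hPQ j h1 hjn).1 hP), hfg j h1 hjn]
  · rw [if_neg hP, if_neg (mt (hPQ j h1 hjn).2 hP)]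

/-- Read backwards from `n`, the two counts can never separate. -/
lemma countTo_eq_of_iff_of_countTo_eq {n : ℕ} (hn : countTo P n = countTo Q n)
    (hstep : ∀ j, 1 ≤ j → j ≤ n → countTo P j = countTo Q j → (P j ↔ Q j)) :
    ∀ j ≤ n, countTo P j = countTo Q j := by
  intro j hj
  induction hj using Nat.decreasingInduction with
  | self => exact hn
  | of_succ k hk ih =>
    have hPQ := hstep (k + 1) (by omega) hk ih
    rw [countTo_succ, countTo_succ] at ih
    by_cases hP : P (k + 1)
    · rw [if_pos hP, if_pos (hPQ.1 hP)] at ih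
      omega
    · rw [if_neg hP, if_neg (mt hPQ.2 hP)] at ih
      omega

end Counting

section Excursions

variable {z : ℕ → ℝ}

lemma sum_Icc_ite_nonpos_sub_le_min (hz : 0 ≤ z 0) (m : ℕ) :
    ∑ j ∈ Finset.Icc 1 m, (if z j ≤ 0 then z j - z (j - 1) else 0) ≤ min 0 (z m) := by
  induction m with
  | zero => simpa using hz
  | succ m ih =>
    rw [Finset.sum_Icc_succ_top (by omega), Nat.add_sub_cancel]
    have := min_le_left 0 (z m)
    have := min_le_right 0 (z m)
    split_ifs with h
    · rw [min_eq_right h]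
      linarith
    · rw [min_eq_left (not_le.1 h).le]
      linarith

lemma max_le_sum_Icc_ite_pos_sub (hz : z 0 ≤ 0) (m : ℕ) :
    max 0 (z m) ≤ ∑ j ∈ Finset.Icc 1 m, (if 0 < z j then z j - z (j - 1) else 0) := by
  induction m with
  | zero => simpa using hz
  | succ m ih =>
    rw [Finset.sum_Icc_succ_top (by omega), Nat.add_sub_cancel]
    have := le_max_left 0 (z m)
    have := le_max_right 0 (z m)
    split_ifs with h
    · rw [max_eq_right h.le]
      linarith
    · rw [max_eq_left (not_lt.1 h)]
      linarith

end Excursions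

section Path

variable {V : Type*} [AddCommGroup V]

def incr (x : ℕ → V) (m : ℕ) : V := x m - x (m - 1)

lemma sum_Icc_incr (x : ℕ → V) (n : ℕ) : ∑ m ∈ Finset.Icc 1 n, incr x m = x n - x 0 := by
  induction n with
  | zero => simp
  | succ n ih =>
    rw [Finset.sum_Icc_succ_top (by omega), ih, incr, Nat.add_sub_cancel]
    abel

variable {ζ : ℕ}

def pathOf (δ : Fin ζ → V) (n : ℕ) : V := ∑ j ∈ Finset.univ.filter (fun j : Fin ζ => j < n), δ j

lemma pathOf_zero (δ : Fin ζ → V) : pathOf δ 0 = 0 := by simp [pathOf]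

lemma pathOf_succ (δ : Fin ζ → V) {n : ℕ} (h : n < ζ) :
    pathOf δ (n + 1) = pathOf δ n + δ ⟨n, h⟩ := by
  unfold pathOf
  rw [show Finset.univ.filter (fun j : Fin ζ => j < n + 1)
      = insert ⟨n, h⟩ (Finset.univ.filter fun j : Fin ζ => j < n) by
    ext j
    simp only [Finset.mem_filter, Finset.mem_insert, Finset.mem_univ, true_and, Fin.ext_iff]
    omega]
  rw [Finset.sum_insert (by simp), add_comm]

lemma incr_pathOf (δ : Fin ζ → V) {m : ℕ} (h1 : 1 ≤ m) (h2 : m ≤ ζ) :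
    incr (pathOf δ) m = δ ⟨m - 1, by omega⟩ := by
  obtain ⟨n, rfl⟩ : ∃ n, m = n + 1 := ⟨m - 1, by omega⟩
  simp only [incr, Nat.add_sub_cancel, pathOf_succ δ (by omega : n < ζ), add_sub_cancel_left]

lemma pathOf_increments (x : ℕ → V) (hx0 : x 0 = 0) {n : ℕ} (hn : n ≤ ζ) :
    pathOf (fun j : Fin ζ => x (j + 1) - x j) n = x n := by
  induction n with
  | zero => rw [pathOf_zero, hx0]
  | succ n ih =>
    rw [pathOf_succ _ (by omega), ih (by omega)]
    abel

lemma projZ_pathOf_zero (η : Fin d → ℝ) (δ : Fin ζ → Fin d → ℝ) : projZ η (pathOf δ) 0 = 0 := by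
  rw [projZ, pathOf_zero, zero_dotProduct]

end Path

/-- `(-←X, →X)` for the chain cut at time `t` instead of `τ`. -/
def splitAt (ζ : ℕ) (x : ℕ → Fin d → ℝ) (t : ℕ) :
    (ℕ → Option (Fin d → ℝ)) × (ℕ → Option (Fin d → ℝ)) :=
  (fun i => Option.map (fun v => -v) (if i ≤ t then some (x (t - i) - x t) else none),
    fun i => if i ≤ ζ - t then some (x (t + i) - x t) else none)

section Congr

variable (η : Fin d → ℝ) (ζ : ℕ) {x y : ℕ → Fin d → ℝ}

lemma lastArgmin_le : lastArgmin η ζ x ≤ ζ := by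
  unfold lastArgmin
  rcases Set.eq_empty_or_nonempty {i | i ≤ ζ ∧ ∀ j ≤ ζ, projZ η x i ≤ projZ η x j} with h | h
  · rw [h, csSup_empty]
    exact Nat.zero_le ζ
  · exact csSup_le h fun i hi => hi.1

lemma lastArgmin_eq {k : ℕ} (hk : k ≤ ζ) (hmin : ∀ j ≤ ζ, projZ η x k ≤ projZ η x j)
    (hlt : ∀ j ≤ ζ, k < j → projZ η x k < projZ η x j) : lastArgmin η ζ x = k :=
  le_antisymm
    (csSup_le ⟨k, hk, hmin⟩ fun i ⟨hi, hmi⟩ => not_lt.1 fun hki =>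
      (hmi k hk).not_gt (hlt i hi hki))
    (le_csSup ⟨ζ, fun _ hi => hi.1⟩ ⟨hk, hmin⟩)

lemma lastArgmin_congr
    (h : ∀ i ≤ ζ, ∀ j ≤ ζ, (projZ η x i ≤ projZ η x j ↔ projZ η y i ≤ projZ η y j)) :
    lastArgmin η ζ x = lastArgmin η ζ y := by
  unfold lastArgmin
  congr 1
  ext i
  exact and_congr_right fun hi => forall₂_congr fun j hj => h i hi j hj

lemma splitAt_lastArgmin_congr (hxy : ∀ j ≤ ζ, x j = y j) :
    splitAt ζ x (lastArgmin η ζ x) = splitAt ζ y (lastArgmin η ζ y) := by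
  have hτ : lastArgmin η ζ x = lastArgmin η ζ y :=
    lastArgmin_congr η ζ fun i hi j hj => by rw [projZ, projZ, projZ, projZ, hxy i hi, hxy j hj]
  have hτζ := lastArgmin_le η ζ (x := y)
  rw [hτ]
  refine Prod.ext (funext fun i => ?_) (funext fun i => ?_)
  · simp only [splitAt]
    split_ifs
    · rw [hxy _ (by omega), hxy _ hτζ]
    · rfl
  · simp only [splitAt]
    split_ifs
    · rw [hxy _ (by omega), hxy _ hτζ]
    · rfl

lemma downChain_congr (hxy : ∀ j ≤ ζ, x j = y j) : downChain η ζ x = downChain η ζ y := by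
  have hP : ∀ j, 1 ≤ j → j ≤ ζ → (projZ η x j ≤ 0 ↔ projZ η y j ≤ 0) := fun j _ hj => by
    rw [projZ, projZ, hxy j hj]
  have hA : Ami η x ζ = Ami η y ζ := countTo_congr hP
  funext i
  unfold downChain
  by_cases hi : i ≤ Ami η x ζ
  · rw [if_pos hi, if_pos (hA ▸ hi)]
    exact congrArg some (sum_Icc_countInv_ite_congr hP
      (fun j _ hj => by rw [hxy j hj, hxy (j - 1) (by omega)]) hi)
  · rw [if_neg hi, if_neg (hA ▸ hi)]

lemma upChain_congr (hxy : ∀ j ≤ ζ, x j = y j) : upChain η ζ x = upChain η ζ y := by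
  have hP : ∀ j, 1 ≤ j → j ≤ ζ → (0 < projZ η x j ↔ 0 < projZ η y j) := fun j _ hj => by
    rw [projZ, projZ, hxy j hj]
  have hA : Apl η x ζ = Apl η y ζ := countTo_congr hP
  funext i
  unfold upChain
  by_cases hi : i ≤ Apl η x ζ
  · rw [if_pos hi, if_pos (hA ▸ hi)]
    exact congrArg some (sum_Icc_countInv_ite_congr hP
      (fun j _ hj => by rw [hxy j hj, hxy (j - 1) (by omega)]) hi)
  · rw [if_neg hi, if_neg (hA ▸ hi)]

end Congr

section Rearrangement

variable (η : Fin d → ℝ) {ζ : ℕ} (δ : Fin ζ → Fin d → ℝ)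

abbrev IsNegStep (j : ℕ) : Prop := projZ η (pathOf δ) j ≤ 0

abbrev IsPosStep (j : ℕ) : Prop := 0 < projZ η (pathOf δ) j

def numNeg : ℕ := countTo (IsNegStep η δ) ζ

def negSum (r : ℕ) : Fin d → ℝ :=
  ∑ l ∈ Finset.Icc 1 r, incr (pathOf δ) (countInv (IsNegStep η δ) l)

def posSum (r : ℕ) : Fin d → ℝ :=
  ∑ l ∈ Finset.Icc 1 r, incr (pathOf δ) (countInv (IsPosStep η δ) l)

lemma numNeg_le : numNeg η δ ≤ ζ := countTo_le ζ

lemma countTo_posStep (m : ℕ) :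
    countTo (IsPosStep η δ) m = m - countTo (IsNegStep η δ) m := by
  have := countTo_add_countTo_of_iff_not (P := IsNegStep η δ) (Q := IsPosStep η δ)
    (fun _ => not_le.symm) m
  omega

lemma countTo_posStep_self : countTo (IsPosStep η δ) ζ = ζ - numNeg η δ := countTo_posStep η δ ζ

lemma negSum_countTo (m : ℕ) : negSum η δ (countTo (IsNegStep η δ) m)
    = ∑ j ∈ Finset.Icc 1 m, if IsNegStep η δ j then incr (pathOf δ) j else 0 :=
  (sum_Icc_ite_eq_sum_countInv _ m).symm

lemma posSum_countTo (m : ℕ) : posSum η δ (countTo (IsPosStep η δ) m)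
    = ∑ j ∈ Finset.Icc 1 m, if IsPosStep η δ j then incr (pathOf δ) j else 0 :=
  (sum_Icc_ite_eq_sum_countInv _ m).symm

lemma downChain_pathOf (i : ℕ) :
    downChain η ζ (pathOf δ) i = if i ≤ numNeg η δ then some (negSum η δ i) else none := by
  show (if i ≤ numNeg η δ then some (∑ j ∈ Finset.Icc 1 (countInv (IsNegStep η δ) i),
    if IsNegStep η δ j then incr (pathOf δ) j else 0) else none) = _
  split_ifs with hi
  · rw [← negSum_countTo, countTo_countInv hi]
  · rfl

lemma upChain_pathOf (i : ℕ) :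
    upChain η ζ (pathOf δ) i = if i ≤ ζ - numNeg η δ then some (posSum η δ i) else none := by
  show (if i ≤ countTo (IsPosStep η δ) ζ then some (∑ j ∈ Finset.Icc 1
    (countInv (IsPosStep η δ) i), if IsPosStep η δ j then incr (pathOf δ) j else 0) else none) = _
  rw [countTo_posStep_self]
  split_ifs with hi
  · rw [← posSum_countTo, countTo_countInv (n := ζ) (by rw [countTo_posStep_self]; exact hi)]
  · rfl

lemma negSum_dotProduct_nonpos {r : ℕ} (hr : r ≤ numNeg η δ) : negSum η δ r ⬝ᵥ η ≤ 0 := by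
  rw [← countTo_countInv hr, negSum_countTo, sum_dotProduct]
  refine le_trans (le_of_eq (Finset.sum_congr rfl fun j _ => ?_))
    ((sum_Icc_ite_nonpos_sub_le_min (projZ_pathOf_zero η δ).ge _).trans (min_le_left _ _))
  split_ifs <;> simp [incr, projZ, sub_dotProduct]

lemma posSum_dotProduct_pos {r : ℕ} (h1 : 1 ≤ r) (hr : r ≤ ζ - numNeg η δ) :
    0 < posSum η δ r ⬝ᵥ η := by
  rw [← countTo_posStep_self] at hr
  have hpos : IsPosStep η δ (countInv (IsPosStep η δ) r) := countInv_mem h1 hr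
  rw [← countTo_countInv hr, posSum_countTo, sum_dotProduct]
  refine lt_of_lt_of_le hpos (le_trans ((le_max_right _ _).trans
    (max_le_sum_Icc_ite_pos_sub (projZ_pathOf_zero η δ).le _)) (le_of_eq ?_))
  refine Finset.sum_congr rfl fun j _ => ?_
  split_ifs <;> simp [incr, projZ, sub_dotProduct]

/-- The `m`-th step of the rearranged chain is the step `rearrIndex η δ m` of the original one:
first the steps ending in `Z ≤ 0` in reverse order, then those ending in `Z > 0` in order. -/
def rearrIndex (m : ℕ) : ℕ :=
  if m ≤ numNeg η δ then countInv (IsNegStep η δ) (numNeg η δ + 1 - m)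
  else countInv (IsPosStep η δ) (m - numNeg η δ)

def rearrPos (j : ℕ) : ℕ :=
  if IsNegStep η δ j then numNeg η δ + 1 - countTo (IsNegStep η δ) j
  else numNeg η δ + countTo (IsPosStep η δ) j

lemma rearrIndex_mem {m : ℕ} (h1 : 1 ≤ m) (h2 : m ≤ ζ) :
    1 ≤ rearrIndex η δ m ∧ rearrIndex η δ m ≤ ζ := by
  have hk := numNeg_le η δ
  unfold rearrIndex
  split_ifs with hm
  · have hi : numNeg η δ + 1 - m ≤ numNeg η δ := by omega
    exact ⟨one_le_countInv (by omega) hi, countInv_le hi⟩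
  · have hi : m - numNeg η δ ≤ countTo (IsPosStep η δ) ζ := by
      rw [countTo_posStep_self]
      omega
    exact ⟨one_le_countInv (by omega) hi, countInv_le hi⟩

lemma rearrPos_rearrIndex {m : ℕ} (h1 : 1 ≤ m) (h2 : m ≤ ζ) :
    rearrPos η δ (rearrIndex η δ m) = m := by
  have hk := numNeg_le η δ
  unfold rearrIndex
  split_ifs with hm
  · have hi : numNeg η δ + 1 - m ≤ numNeg η δ := by omega
    rw [rearrPos, if_pos (countInv_mem (by omega) hi), countTo_countInv hi]
    omega
  · have hi : m - numNeg η δ ≤ countTo (IsPosStep η δ) ζ := by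
      rw [countTo_posStep_self]
      omega
    have hP : IsPosStep η δ (countInv (IsPosStep η δ) (m - numNeg η δ)) :=
      countInv_mem (by omega) hi
    rw [rearrPos, if_neg (not_le.2 hP), countTo_countInv hi]
    omega

def rearrPerm : Equiv.Perm (Fin ζ) :=
  Equiv.ofBijective
    (fun i => ⟨rearrIndex η δ (i + 1) - 1, by
      have := rearrIndex_mem η δ (m := i + 1) (by omega) (by omega)
      omega⟩)
    (Finite.injective_iff_bijective.1 fun i i' h => by
      have hi := rearrIndex_mem η δ (m := i + 1) (by omega) (by omega)
      have hi' := rearrIndex_mem η δ (m := i' + 1) (by omega) (by omega)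
      have h' := congrArg (rearrPos η δ) (show rearrIndex η δ (i + 1) = rearrIndex η δ (i' + 1) by
        have := congrArg Fin.val h
        simp only at this
        omega)
      rw [rearrPos_rearrIndex η δ (by omega) (by omega),
        rearrPos_rearrIndex η δ (by omega) (by omega)] at h'
      exact Fin.ext (by omega))

lemma incr_pathOf_comp_rearrPerm {m : ℕ} (h1 : 1 ≤ m) (h2 : m ≤ ζ) :
    incr (pathOf (δ ∘ rearrPerm η δ)) m = incr (pathOf δ) (rearrIndex η δ m) := by
  have hs := rearrIndex_mem η δ h1 h2
  rw [incr_pathOf _ h1 h2, incr_pathOf _ hs.1 hs.2]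
  simp only [Function.comp_apply, rearrPerm, Equiv.ofBijective_apply, Nat.sub_add_cancel h1]

lemma pathOf_rearrange_sub_of_le {a : ℕ} (ha : a ≤ numNeg η δ) :
    pathOf (δ ∘ rearrPerm η δ) (numNeg η δ) - pathOf (δ ∘ rearrPerm η δ) (numNeg η δ - a)
      = negSum η δ a := by
  induction a with
  | zero => simp [negSum]
  | succ a ih =>
    have hk := numNeg_le η δ
    have hidx : rearrIndex η δ (numNeg η δ - a) = countInv (IsNegStep η δ) (a + 1) := by
      rw [rearrIndex, if_pos (by omega)]
      congr 1
      omega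
    have hstep := incr_pathOf_comp_rearrPerm η δ (m := numNeg η δ - a) (by omega) (by omega)
    rw [hidx, incr, show numNeg η δ - a - 1 = numNeg η δ - (a + 1) by omega] at hstep
    rw [negSum, Finset.sum_Icc_succ_top (by omega), ← negSum, ← ih (by omega), ← hstep]
    abel

lemma pathOf_rearrange_add_sub {b : ℕ} (hb : b ≤ ζ - numNeg η δ) :
    pathOf (δ ∘ rearrPerm η δ) (numNeg η δ + b) - pathOf (δ ∘ rearrPerm η δ) (numNeg η δ)
      = posSum η δ b := by
  induction b with
  | zero => simp [posSum]
  | succ b ih =>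
    have hk := numNeg_le η δ
    have hidx : rearrIndex η δ (numNeg η δ + (b + 1)) = countInv (IsPosStep η δ) (b + 1) := by
      rw [rearrIndex, if_neg (by omega)]
      congr 1
      omega
    have hstep := incr_pathOf_comp_rearrPerm η δ (m := numNeg η δ + (b + 1)) (by omega) (by omega)
    rw [hidx, incr, show numNeg η δ + (b + 1) - 1 = numNeg η δ + b by omega] at hstep
    rw [posSum, Finset.sum_Icc_succ_top (by omega), ← posSum, ← ih (by omega), ← hstep,
      ← add_assoc]
    abel

lemma lastArgmin_rearrange : lastArgmin η ζ (pathOf (δ ∘ rearrPerm η δ)) = numNeg η δ := by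
  have hk := numNeg_le η δ
  have hZ : ∀ i j, projZ η (pathOf (δ ∘ rearrPerm η δ)) j - projZ η (pathOf (δ ∘ rearrPerm η δ)) i
      = (pathOf (δ ∘ rearrPerm η δ) j - pathOf (δ ∘ rearrPerm η δ) i) ⬝ᵥ η :=
    fun i j => (sub_dotProduct _ _ _).symm
  have hright : ∀ j ≤ ζ, numNeg η δ < j →
      projZ η (pathOf (δ ∘ rearrPerm η δ)) (numNeg η δ)
        < projZ η (pathOf (δ ∘ rearrPerm η δ)) j := by
    intro j hj hlt
    have := posSum_dotProduct_pos η δ (r := j - numNeg η δ) (by omega) (by omega)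
    rw [← pathOf_rearrange_add_sub η δ (by omega), Nat.add_sub_cancel' hlt.le, ← hZ] at this
    linarith
  refine lastArgmin_eq η ζ hk (fun j hj => ?_) hright
  rcases le_or_gt j (numNeg η δ) with hle | hgt
  · have := negSum_dotProduct_nonpos η δ (r := numNeg η δ - j) (by omega)
    rw [← pathOf_rearrange_sub_of_le η δ (by omega), Nat.sub_sub_self hle, ← hZ] at this
    linarith
  · exact (hright j hj hgt).le

theorem splitAt_rearrange :
    splitAt ζ (pathOf (δ ∘ rearrPerm η δ)) (lastArgmin η ζ (pathOf (δ ∘ rearrPerm η δ)))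
      = (downChain η ζ (pathOf δ), upChain η ζ (pathOf δ)) := by
  rw [lastArgmin_rearrange]
  refine Prod.ext (funext fun i => ?_) (funext fun i => ?_)
  · simp only [splitAt, downChain_pathOf]
    split_ifs with hi
    · rw [Option.map_some, ← pathOf_rearrange_sub_of_le η δ hi, neg_sub]
    · rfl
  · simp only [splitAt, upChain_pathOf]
    split_ifs with hi
    · rw [pathOf_rearrange_add_sub η δ hi]
    · rfl

lemma pathOf_eq_rearrange_sub {j : ℕ} (hj : j ≤ ζ) :
    pathOf δ j = pathOf (δ ∘ rearrPerm η δ) (numNeg η δ + countTo (IsPosStep η δ) j)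
      - pathOf (δ ∘ rearrPerm η δ) (numNeg η δ - countTo (IsNegStep η δ) j) := by
  have ha : countTo (IsNegStep η δ) j ≤ numNeg η δ := countTo_mono hj
  have hb : countTo (IsPosStep η δ) j ≤ ζ - numNeg η δ :=
    countTo_posStep_self η δ ▸ countTo_mono hj
  have hsplit : pathOf δ j
      = negSum η δ (countTo (IsNegStep η δ) j) + posSum η δ (countTo (IsPosStep η δ) j) := by
    have htel : pathOf δ j = ∑ m ∈ Finset.Icc 1 j, incr (pathOf δ) m := by
      rw [sum_Icc_incr, pathOf_zero, sub_zero]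
    rw [htel, negSum_countTo, posSum_countTo, ← Finset.sum_add_distrib]
    refine Finset.sum_congr rfl fun m _ => ?_
    by_cases h : IsNegStep η δ m
    · rw [if_pos h, if_neg (not_lt.2 h), add_zero]
    · rw [if_neg h, if_pos (not_le.1 h), zero_add]
  rw [hsplit, ← pathOf_rearrange_sub_of_le η δ ha, ← pathOf_rearrange_add_sub η δ hb]
  abel

variable {η}

lemma rearrPerm_eq_of_countTo_eq {δ₁ δ₂ : Fin ζ → Fin d → ℝ}
    (h : ∀ j ≤ ζ, countTo (IsNegStep η δ₁) j = countTo (IsNegStep η δ₂) j) :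
    rearrPerm η δ₁ = rearrPerm η δ₂ := by
  have hk : numNeg η δ₁ = numNeg η δ₂ := h ζ le_rfl
  have hpos : ∀ j ≤ ζ, countTo (IsPosStep η δ₁) j = countTo (IsPosStep η δ₂) j := fun j hj => by
    rw [countTo_posStep, countTo_posStep, h j hj]
  have hidx : ∀ m, 1 ≤ m → m ≤ ζ → rearrIndex η δ₁ m = rearrIndex η δ₂ m := by
    intro m h1 h2
    have := numNeg_le η δ₁
    unfold rearrIndex
    rw [← hk]
    split_ifs
    · exact countInv_congr h (show _ ≤ numNeg η δ₁ by omega)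
    · exact countInv_congr hpos (show _ ≤ countTo (IsPosStep η δ₁) ζ by
        rw [countTo_posStep_self]
        omega)
  ext i
  simp only [rearrPerm, Equiv.ofBijective_apply, hidx (i + 1) (by omega) (by omega)]

/-- By `pathOf_eq_rearrange_sub`, two candidates with the same number of nonpositive steps up to
time `j` are at the same position at time `j`, so their `j`-th steps have the same sign. -/
lemma rearrPerm_eq_of_rearrange_eq {δ₁ δ₂ : Fin ζ → Fin d → ℝ}
    (h : δ₁ ∘ rearrPerm η δ₁ = δ₂ ∘ rearrPerm η δ₂) : rearrPerm η δ₁ = rearrPerm η δ₂ := by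
  have hk : numNeg η δ₁ = numNeg η δ₂ := by
    rw [← lastArgmin_rearrange η δ₁, h, lastArgmin_rearrange]
  refine rearrPerm_eq_of_countTo_eq (countTo_eq_of_iff_of_countTo_eq hk fun j _ hj hc => ?_)
  have hc' : countTo (IsPosStep η δ₁) j = countTo (IsPosStep η δ₂) j := by
    rw [countTo_posStep, countTo_posStep, hc]
  have hpath : pathOf δ₁ j = pathOf δ₂ j := by
    rw [pathOf_eq_rearrange_sub η δ₁ hj, pathOf_eq_rearrange_sub η δ₂ hj, h, hk, hc, hc']
  unfold IsNegStep projZ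
  rw [hpath]

end Rearrangement

section Exchangeable

variable {ι E : Type*}

lemma measurable_comp_perm [MeasurableSpace E] (π : Equiv.Perm ι) :
    Measurable fun δ : ι → E => δ ∘ π :=
  measurable_pi_lambda _ fun j => measurable_pi_apply (π j)

variable [Fintype ι]

lemma sum_perm_comp_rearrange {M : Type*} [AddCommMonoid M] {b : (ι → E) → Equiv.Perm ι}
    (hb : ∀ δ₁ δ₂, δ₁ ∘ b δ₁ = δ₂ ∘ b δ₂ → b δ₁ = b δ₂) (f : (ι → E) → M) (δ : ι → E) :
    ∑ π : Equiv.Perm ι, f ((δ ∘ π) ∘ b (δ ∘ π)) = ∑ π : Equiv.Perm ι, f (δ ∘ π) := by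
  refine Fintype.sum_bijective (fun π : Equiv.Perm ι => π * b (δ ∘ π))
    (Finite.injective_iff_bijective.1 fun π₁ π₂ h => ?_) _ _ fun π => rfl
  have h : π₁ * b (δ ∘ π₁) = π₂ * b (δ ∘ π₂) := h
  have hb' : b (δ ∘ π₁) = b (δ ∘ π₂) := hb _ _ (by
    change δ ∘ ⇑(π₁ * b (δ ∘ π₁)) = δ ∘ ⇑(π₂ * b (δ ∘ π₂))
    rw [h])
  rw [hb'] at h
  exact mul_right_cancel h

variable [MeasurableSpace E]

lemma measurable_comp_rearrange {b : (ι → E) → Equiv.Perm ι}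
    (hb : ∀ σ, MeasurableSet {δ | b δ = σ}) : Measurable fun δ => δ ∘ b δ := fun s hs => by
  have : (fun δ => δ ∘ b δ) ⁻¹' s = ⋃ σ, {δ | b δ = σ} ∩ (fun δ : ι → E => δ ∘ σ) ⁻¹' s := by
    ext δ
    simp
  rw [this]
  exact MeasurableSet.iUnion fun σ => (hb σ).inter (measurable_comp_perm σ hs)

/-- Averaged over all permutations of the input, the rearranged sequences run once through all
permutations of the input (`sum_perm_comp_rearrange`). -/
theorem map_comp_rearrange_eq {ν : Measure (ι → E)}
    (hν : ∀ π : Equiv.Perm ι, ν.map (fun δ => δ ∘ π) = ν) {b : (ι → E) → Equiv.Perm ι}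
    (hb_meas : ∀ σ, MeasurableSet {δ | b δ = σ})
    (hb : ∀ δ₁ δ₂, δ₁ ∘ b δ₁ = δ₂ ∘ b δ₂ → b δ₁ = b δ₂) :
    ν.map (fun δ => δ ∘ b δ) = ν := by
  have hR := measurable_comp_rearrange hb_meas
  have hinv : ∀ g : (ι → E) → ENNReal, Measurable g →
      ∀ π : Equiv.Perm ι, ∫⁻ δ, g (δ ∘ π) ∂ν = ∫⁻ δ, g δ ∂ν := fun g hg π => by
    rw [← lintegral_map hg (measurable_comp_perm π), hν π]
  refine Measure.ext_of_lintegral _ fun f hf => ?_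
  rw [lintegral_map hf hR]
  have hcard : (Fintype.card (Equiv.Perm ι) : ENNReal) ≠ 0 := by simp
  refine (ENNReal.mul_right_inj hcard (ENNReal.natCast_ne_top _)).1 ?_
  calc (Fintype.card (Equiv.Perm ι) : ENNReal) * ∫⁻ δ, f (δ ∘ b δ) ∂ν
      = ∑ π : Equiv.Perm ι, ∫⁻ δ, f ((δ ∘ π) ∘ b (δ ∘ π)) ∂ν := by
        rw [Finset.sum_congr rfl fun π _ => hinv (fun δ => f (δ ∘ b δ)) (hf.comp hR) π]
        simp
    _ = ∫⁻ δ, ∑ π : Equiv.Perm ι, f ((δ ∘ π) ∘ b (δ ∘ π)) ∂ν :=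
        (lintegral_finsetSum _ fun π _ => (hf.comp hR).comp (measurable_comp_perm π)).symm
    _ = ∫⁻ δ, ∑ π : Equiv.Perm ι, f (δ ∘ π) ∂ν :=
        lintegral_congr fun δ => sum_perm_comp_rearrange hb f δ
    _ = ∑ π : Equiv.Perm ι, ∫⁻ δ, f (δ ∘ π) ∂ν :=
        lintegral_finsetSum _ fun π _ => hf.comp (measurable_comp_perm π)
    _ = (Fintype.card (Equiv.Perm ι) : ENNReal) * ∫⁻ δ, f δ ∂ν := by
        simp [hinv f hf]

end Exchangeable

section Measurability

variable {α β γ : Type*} [MeasurableSpace α] [MeasurableSpace β] [MeasurableSpace γ]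
  [Countable γ] [MeasurableSingletonClass γ]

lemma measurableSet_of_saturated {c : α → γ} (hc : Measurable c) {s : Set α}
    (hs : ∀ a a', c a = c a' → a ∈ s → a' ∈ s) : MeasurableSet s := by
  have : s = c ⁻¹' (c '' s) :=
    (Set.subset_preimage_image c s).antisymm fun a ⟨a', ha', hca⟩ => hs a' a hca ha'
  rw [this]
  exact hc (Set.to_countable _).measurableSet

lemma measurable_of_factor {c : α → γ} (hc : Measurable c) {f : α → β}
    (hf : ∀ a a', c a = c a' → f a = f a') : Measurable f := fun _ _ =>
  measurableSet_of_saturated hc fun a a' h ha => by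
    rw [Set.mem_preimage, ← hf a a' h]
    exact ha

lemma measurable_some : Measurable (some : α → Option α) := fun _ hs => hs

lemma measurable_option_map {f : α → β} (hf : Measurable f) : Measurable (Option.map f) :=
  fun _ hs => hf hs

variable (η : Fin d → ℝ) (ζ : ℕ)

lemma measurable_pathOf (n : ℕ) : Measurable fun δ : Fin ζ → Fin d → ℝ => pathOf δ n :=
  Finset.measurable_sum _ fun j _ => measurable_pi_apply j

lemma measurable_projZ_pathOf (n : ℕ) :
    Measurable fun δ : Fin ζ → Fin d → ℝ => projZ η (pathOf δ) n :=
  (continuous_id.dotProduct continuous_const).measurable.comp (measurable_pathOf ζ n)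

/-- The chain's order pattern on `{0, …, ζ}`; since `Z_0 = 0` it also records the signs of
`Z`. -/
def orderPattern (δ : Fin ζ → Fin d → ℝ) : Fin (ζ + 1) → Fin (ζ + 1) → Prop :=
  fun i j => projZ η (pathOf δ) i ≤ projZ η (pathOf δ) j

lemma measurable_orderPattern : Measurable (orderPattern η ζ) :=
  measurable_pi_lambda _ fun i => measurable_pi_lambda _ fun j => measurableSet_setOfPred.1
    (measurableSet_le (measurable_projZ_pathOf η ζ i) (measurable_projZ_pathOf η ζ j))

lemma measurable_lastArgmin_pathOf :
    Measurable fun δ : Fin ζ → Fin d → ℝ => lastArgmin η ζ (pathOf δ) :=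
  measurable_of_factor (measurable_orderPattern η ζ) fun _ _ h =>
    lastArgmin_congr η ζ fun i hi j hj => Iff.of_eq (congrFun₂ h ⟨i, by omega⟩ ⟨j, by omega⟩)

lemma measurableSet_rearrPerm_eq (σ : Equiv.Perm (Fin ζ)) :
    MeasurableSet {δ : Fin ζ → Fin d → ℝ | rearrPerm η δ = σ} :=
  measurableSet_of_saturated (measurable_orderPattern η ζ) fun δ δ' h hδ => by
    refine (rearrPerm_eq_of_countTo_eq fun j _ => countTo_congr fun m _ hm => ?_).symm.trans hδ
    have := congrFun₂ h ⟨m, by omega⟩ 0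
    simp only [orderPattern, Fin.val_zero, projZ_pathOf_zero] at this
    exact Iff.of_eq this

lemma measurable_splitAt (t : ℕ) :
    Measurable fun δ : Fin ζ → Fin d → ℝ => splitAt ζ (pathOf δ) t := by
  have hsub : ∀ m n, Measurable fun δ : Fin ζ → Fin d → ℝ => some (pathOf δ m - pathOf δ n) :=
    fun m n => measurable_some.comp ((measurable_pathOf ζ m).sub (measurable_pathOf ζ n))
  unfold splitAt
  refine (measurable_pi_lambda _ fun i => ?_).prodMk (measurable_pi_lambda _ fun i => ?_)
  · exact (measurable_option_map measurable_neg).comp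
      (Measurable.ite (.const _) (hsub _ _) measurable_const)
  · exact Measurable.ite (.const _) (hsub _ _) measurable_const

lemma measurable_splitAt_lastArgmin :
    Measurable fun δ : Fin ζ → Fin d → ℝ =>
      splitAt ζ (pathOf δ) (lastArgmin η ζ (pathOf δ)) :=
  (measurable_from_prod_countable_left (f := fun p : (Fin ζ → Fin d → ℝ) × ℕ =>
      splitAt ζ (pathOf p.1) p.2) (measurable_splitAt ζ)).comp
    (measurable_id.prodMk (measurable_lastArgmin_pathOf η ζ))

end Measurability

theorem discrete_representation_general
    {Ω : Type*} [MeasurableSpace Ω] (μ : Measure Ω)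
    (ζ : ℕ) (η : Fin d → ℝ)
    (X : Ω → ℕ → Fin d → ℝ) (hmeas : ∀ i, Measurable fun ω => X ω i)
    (hX0 : ∀ ω, X ω 0 = 0)
    (hexch : ∀ σ : Equiv.Perm (Fin ζ),
      Measure.map (fun ω => fun j : Fin ζ => X ω ((σ j : ℕ) + 1) - X ω (σ j : ℕ)) μ
        = Measure.map (fun ω => fun j : Fin ζ => X ω ((j : ℕ) + 1) - X ω (j : ℕ)) μ) :
    Measure.map (fun ω => (downChain η ζ (X ω), upChain η ζ (X ω))) μ
      = Measure.map (fun ω =>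
          (fun i => Option.map (fun v => -v) (preChain η ζ (X ω) i),
            postChain η ζ (X ω))) μ := by
  set inc : Ω → Fin ζ → Fin d → ℝ := fun ω j => X ω ((j : ℕ) + 1) - X ω (j : ℕ)
  have hinc : Measurable inc := measurable_pi_lambda _ fun j => (hmeas _).sub (hmeas _)
  have hpath : ∀ ω, ∀ j ≤ ζ, X ω j = pathOf (inc ω) j := fun ω _ hj =>
    (pathOf_increments (X ω) (hX0 ω) hj).symm
  have hS := measurable_splitAt_lastArgmin η ζ
  have hR := measurable_comp_rearrange (measurableSet_rearrPerm_eq η ζ)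
  have hlaw : (μ.map inc).map (fun δ => δ ∘ rearrPerm η δ) = μ.map inc :=
    map_comp_rearrange_eq
      (fun π => by rw [Measure.map_map (measurable_comp_perm π) hinc]; exact hexch π)
      (measurableSet_rearrPerm_eq η ζ) fun _ _ => rearrPerm_eq_of_rearrange_eq
  calc μ.map (fun ω => (downChain η ζ (X ω), upChain η ζ (X ω)))
      = ((μ.map inc).map fun δ => δ ∘ rearrPerm η δ).map
          fun δ => splitAt ζ (pathOf δ) (lastArgmin η ζ (pathOf δ)) := by
        rw [Measure.map_map hS hR, Measure.map_map (hS.comp hR) hinc]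
        congr 1
        funext ω
        rw [Function.comp_apply, Function.comp_apply, splitAt_rearrange,
          downChain_congr η ζ (hpath ω), upChain_congr η ζ (hpath ω)]
    _ = μ.map (fun ω => splitAt ζ (X ω) (lastArgmin η ζ (X ω))) := by
        rw [hlaw, Measure.map_map hS hinc]
        congr 1
        funext ω
        exact (splitAt_lastArgmin_congr η ζ (hpath ω)).symm

/-- **Discrete representation theorem** (Theorem A.1): for a chain with exchangeable
increments, `(X↓, X↑)` has the same law as `(-←X, →X)`. -/
theorem discrete_representation
    {Ω : Type*} [MeasurableSpace Ω] (μ : Measure Ω) [IsProbabilityMeasure μ]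
    (ζ : ℕ) (η : Fin d → ℝ) (hη : η ≠ 0)
    (X : Ω → ℕ → Fin d → ℝ) (hmeas : ∀ i, Measurable fun ω => X ω i)
    (hX0 : ∀ ω, X ω 0 = 0)
    (hexch : ∀ σ : Equiv.Perm (Fin ζ),
      Measure.map (fun ω => fun j : Fin ζ => X ω ((σ j : ℕ) + 1) - X ω (σ j : ℕ)) μ
        = Measure.map (fun ω => fun j : Fin ζ => X ω ((j : ℕ) + 1) - X ω (j : ℕ)) μ) :
    Measure.map (fun ω => (downChain η ζ (X ω), upChain η ζ (X ω))) μ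
      = Measure.map (fun ω =>
          (fun i => Option.map (fun v => -v) (preChain η ζ (X ω) i),
            postChain η ζ (X ω))) μ :=
  discrete_representation_general μ ζ η X hmeas hX0 hexch
end
end

section
/- Let ξ₁, ξ₂, ..., ξ_n be an exchangeable finite sequence of real random variables with partial sums S_i = ξ₁ + ... + ξ_i, S_0 = 0, and suppose ties do not occur (the minimum of (S_i) is attained at a unique index a.s.). Then the index τ of the minimum of (S_0,...,S_n) satisfies: for each k ∈ {0,...,n}, P(τ = k) = P(#{i ∈ {1,...,n} : S_i > 0} = n − k). -/
open MeasureTheory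
open scoped Classical

noncomputable section

/-- Partial sums `S_i = ξ_1 + ⋯ + ξ_i` (with `S_0 = 0`) of a finite sequence. -/
def partialSum {n : ℕ} (ξ : Fin n → ℝ) (i : ℕ) : ℝ :=
  ∑ j ∈ Finset.range i, if h : j < n then ξ ⟨j, h⟩ else 0

open scoped ENNReal

namespace FellerAux

variable {n : ℕ}

/-- `i` is an argmin of the walk of `y`. -/
def IsMin {n : ℕ} (y : Fin n → ℝ) (i : ℕ) : Prop :=
  i ≤ n ∧ ∀ j ≤ n, partialSum y i ≤ partialSum y j

/-- number of strictly positive partial sums -/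
def npos {n : ℕ} (y : Fin n → ℝ) : ℕ :=
  ((Finset.Icc 1 n).filter fun i => 0 < partialSum y i).card

variable {n : ℕ}

lemma ps_zero (y : Fin n → ℝ) : partialSum y 0 = 0 := by simp [partialSum]

lemma ps_succ (y : Fin n → ℝ) (i : ℕ) (h : i < n) :
    partialSum y (i + 1) = partialSum y i + y ⟨i, h⟩ := by
  unfold partialSum
  rw [Finset.sum_range_succ, dif_pos h]

lemma ps_one (y : Fin (n + 1) → ℝ) : partialSum y 1 = y 0 := by
  rw [ps_succ y 0 n.succ_pos, ps_zero]
  simp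

lemma ps_init (y : Fin (n + 1) → ℝ) {i : ℕ} (hi : i ≤ n) :
    partialSum (Fin.init y) i = partialSum y i := by
  unfold partialSum
  refine Finset.sum_congr rfl fun j hj => ?_
  rw [Finset.mem_range] at hj
  have hjn : j < n := lt_of_lt_of_le hj hi
  have hjn1 : j < n + 1 := by omega
  rw [dif_pos hjn, dif_pos hjn1]
  rfl

lemma ps_tail (y : Fin (n + 1) → ℝ) :
    ∀ i, i ≤ n → partialSum (Fin.tail y) i = partialSum y (i + 1) - y 0 := by
  intro i
  induction i with
  | zero => intro _; rw [ps_zero, ps_one]; ring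
  | succ i ih =>
    intro hi
    have hin : i < n := hi
    rw [ps_succ (Fin.tail y) i hin, ps_succ y (i + 1) (Nat.succ_lt_succ hin),
      ih (Nat.le_of_lt hin)]
    have ht : Fin.tail y ⟨i, hin⟩ = y ⟨i + 1, Nat.succ_lt_succ hin⟩ := rfl
    rw [ht]; ring

lemma ps_total (y : Fin n → ℝ) : partialSum y n = ∑ j : Fin n, y j := by
  unfold partialSum
  rw [← Fin.sum_univ_eq_sum_range (fun m => if h : m < n then y ⟨m, h⟩ else 0) n]
  exact Finset.sum_congr rfl fun j _ => by rw [dif_pos j.isLt]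

lemma ps_total_comp (y : Fin n → ℝ) (σ : Equiv.Perm (Fin n)) :
    partialSum (y ∘ ⇑σ) n = partialSum y n := by
  rw [ps_total, ps_total]
  exact Equiv.sum_comp σ y

lemma exists_isMin (y : Fin n → ℝ) : ∃ i, IsMin y i := by
  obtain ⟨i, hi, hmin⟩ := Finset.exists_min_image (Finset.range (n + 1)) (partialSum y)
    ⟨0, by simp⟩
  exact ⟨i, Nat.lt_succ_iff.mp (Finset.mem_range.mp hi),
    fun j hj => hmin j (Finset.mem_range.mpr (Nat.lt_succ_iff.mpr hj))⟩


/-! ### case `s > 0` -/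

lemma isMin_init_iff (y : Fin (n + 1) → ℝ) (hs : 0 < partialSum y (n + 1)) (k : ℕ) :
    IsMin y k ↔ IsMin (Fin.init y) k := by
  constructor
  · rintro ⟨hk, hmin⟩
    have hk0 : partialSum y k ≤ 0 := by
      have := hmin 0 (Nat.zero_le _); rwa [ps_zero] at this
    have hkn : k ≤ n := by
      by_contra h
      have : k = n + 1 := by omega
      rw [this] at hk0; linarith
    exact ⟨hkn, fun j hj => by
      rw [ps_init y hkn, ps_init y hj]; exact hmin j (by omega)⟩
  · rintro ⟨hk, hmin⟩
    have h0 : partialSum y k ≤ 0 := by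
      have := hmin 0 (Nat.zero_le _)
      rw [ps_init y hk, ps_init y (Nat.zero_le n), ps_zero] at this
      exact this
    refine ⟨by omega, fun j hj => ?_⟩
    by_cases hj' : j ≤ n
    · rw [← ps_init y hk, ← ps_init y hj']; exact hmin j hj'
    · have : j = n + 1 := by omega
      rw [this]; linarith

lemma not_isMin_last (y : Fin (n + 1) → ℝ) (hs : 0 < partialSum y (n + 1)) :
    ¬ IsMin y (n + 1) := by
  rintro ⟨_, hmin⟩
  have := hmin 0 (Nat.zero_le _)
  rw [ps_zero] at this; linarith

lemma npos_pos (y : Fin (n + 1) → ℝ) (hs : 0 < partialSum y (n + 1)) :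
    npos y = npos (Fin.init y) + 1 := by
  unfold npos
  have hins : Finset.Icc 1 (n + 1) = insert (n + 1) (Finset.Icc 1 n) :=
    (Finset.insert_Icc_right_eq_Icc_add_one (by omega)).symm
  rw [hins, Finset.filter_insert, if_pos hs,
    Finset.card_insert_of_notMem (by
      intro h
      have := Finset.mem_Icc.mp (Finset.mem_of_mem_filter _ h)
      omega)]
  have : ((Finset.Icc 1 n).filter fun i => 0 < partialSum y i)
      = (Finset.Icc 1 n).filter fun i => 0 < partialSum (Fin.init y) i := by
    apply Finset.filter_congr
    intro i hi
    rw [ps_init y (Finset.mem_Icc.mp hi).2]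
  rw [this]

/-! ### case `s < 0` -/

lemma isMin_tail_iff (y : Fin (n + 1) → ℝ) (hs : partialSum y (n + 1) < 0) (k : ℕ) :
    IsMin y (k + 1) ↔ IsMin (Fin.tail y) k := by
  constructor
  · rintro ⟨hk, hmin⟩
    have hkn : k ≤ n := by omega
    refine ⟨hkn, fun j hj => ?_⟩
    rw [ps_tail y k hkn, ps_tail y j hj]
    have := hmin (j + 1) (by omega)
    linarith
  · rintro ⟨hk, hmin⟩
    have key : ∀ t, t ≤ n → partialSum y (k + 1) ≤ partialSum y (t + 1) := by
      intro t ht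
      have := hmin t ht
      rw [ps_tail y k hk, ps_tail y t ht] at this
      linarith
    refine ⟨by omega, fun j hj => ?_⟩
    match j with
    | 0 =>
      rw [ps_zero]
      have := key n le_rfl
      linarith
    | (t + 1) => exact key t (by omega)

lemma not_isMin_zero (y : Fin (n + 1) → ℝ) (hs : partialSum y (n + 1) < 0) :
    ¬ IsMin y 0 := by
  rintro ⟨_, hmin⟩
  have := hmin (n + 1) le_rfl
  rw [ps_zero] at this; linarith

lemma npos_neg (y : Fin (n + 1) → ℝ) (hs : partialSum y (n + 1) < 0) :
    npos y = npos (Fin.init y) := by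
  unfold npos
  have hins : Finset.Icc 1 (n + 1) = insert (n + 1) (Finset.Icc 1 n) :=
    (Finset.insert_Icc_right_eq_Icc_add_one (by omega)).symm
  rw [hins, Finset.filter_insert, if_neg (by push_neg; linarith)]
  congr 1
  apply Finset.filter_congr
  intro i hi
  rw [ps_init y (Finset.mem_Icc.mp hi).2]

lemma npos_ne_top (y : Fin (n + 1) → ℝ) (hs : partialSum y (n + 1) < 0) :
    npos y ≠ n + 1 := by
  intro h
  unfold npos at h
  have hsub : ((Finset.Icc 1 (n + 1)).filter fun i => 0 < partialSum y i) ⊆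
      Finset.Icc 1 (n + 1) := Finset.filter_subset _ _
  have hcard : (Finset.Icc 1 (n + 1)).card = n + 1 := by
    rw [Nat.card_Icc]; omega
  have heq := Finset.eq_of_subset_of_card_le hsub (le_of_eq (by rw [hcard, h]))
  have hmem : (n + 1) ∈ (Finset.Icc 1 (n + 1)).filter fun i => 0 < partialSum y i := by
    rw [heq]; exact Finset.mem_Icc.mpr ⟨by omega, le_rfl⟩
  have := (Finset.mem_filter.mp hmem).2
  linarith

/-! ### rotation, and `s ≠ 0` -/

lemma ps_rot (y : Fin (n + 1) → ℝ) (t : ℕ) (ht : t ≤ n) :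
    partialSum (y ∘ ⇑(finRotate (n + 1))) t = partialSum (Fin.tail y) t := by
  unfold partialSum
  refine Finset.sum_congr rfl fun j hj => ?_
  rw [Finset.mem_range] at hj
  have hjn : j < n := lt_of_lt_of_le hj ht
  have hjn1 : j < n + 1 := by omega
  rw [dif_pos hjn1, dif_pos hjn]
  show y (finRotate (n + 1) ⟨j, hjn1⟩) = Fin.tail y ⟨j, hjn⟩
  rw [finRotate_succ_apply]
  show y (⟨j, hjn1⟩ + 1) = y (Fin.succ ⟨j, hjn⟩)
  congr 1
  have hne : (⟨j, hjn1⟩ : Fin (n + 1)) ≠ Fin.last n := by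
    intro h
    have : j = n := by simpa [Fin.ext_iff] using h
    omega
  apply Fin.ext
  rw [Fin.val_add_one, if_neg hne]
  rfl

lemma shift_formula (x : Fin (n + 1) → ℝ) (h0 : partialSum x (n + 1) = 0) :
    ∀ (m : ℕ), ∀ t ≤ n + 1,
      partialSum (x ∘ ⇑((finRotate (n + 1)) ^ m)) t
        = partialSum x ((m + t) % (n + 1)) - partialSum x (m % (n + 1)) := by
  intro m
  induction m with
  | zero =>
    intro t ht
    have hx : x ∘ ⇑((finRotate (n + 1)) ^ 0) = x := by funext j; simp
    rw [hx]
    rcases Nat.lt_or_ge t (n + 1) with h | h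
    · rw [Nat.zero_add, Nat.mod_eq_of_lt h, Nat.zero_mod, ps_zero]
      ring
    · have ht' : t = n + 1 := by omega
      subst ht'
      rw [Nat.zero_add, Nat.mod_self, Nat.zero_mod, h0]
      ring
  | succ m ih =>
    intro t ht
    have hcomp : x ∘ ⇑((finRotate (n + 1)) ^ (m + 1))
        = (x ∘ ⇑((finRotate (n + 1)) ^ m)) ∘ ⇑(finRotate (n + 1)) := by
      funext j
      simp [pow_succ, Equiv.Perm.mul_apply]
    rw [hcomp]
    set y := x ∘ ⇑((finRotate (n + 1)) ^ m) with hy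
    rcases Nat.lt_or_ge t (n + 1) with hlt | hge
    · have htn : t ≤ n := by omega
      rw [ps_rot y t htn, ps_tail y t htn]
      have hy0 : y 0 = partialSum y 1 := (ps_one y).symm
      rw [hy0, ih (t + 1) (by omega), ih 1 (by omega)]
      have e1 : m + (t + 1) = m + 1 + t := by omega
      rw [e1]
      ring
    · have ht' : t = n + 1 := by omega
      subst ht'
      have htot : partialSum (y ∘ ⇑(finRotate (n + 1))) (n + 1) = partialSum x (n + 1) := by
        have : y ∘ ⇑(finRotate (n + 1)) = x ∘ ⇑((finRotate (n + 1)) ^ m * finRotate (n + 1)) := by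
          funext j; simp [hy, Equiv.Perm.mul_apply]
        rw [this, ps_total_comp]
      rw [htot, h0]
      have e2 : (m + 1 + (n + 1)) % (n + 1) = (m + 1) % (n + 1) := Nat.add_mod_right _ _
      rw [e2]
      ring

lemma total_ne_zero (x : Fin (n + 1) → ℝ)
    (hG : ∀ π : Equiv.Perm (Fin (n + 1)), ∃! i, IsMin (x ∘ ⇑π) i) :
    partialSum x (n + 1) ≠ 0 := by
  intro h0
  obtain ⟨m, hm, hmmin⟩ := exists_isMin x
  by_cases hv : partialSum x m = 0
  · obtain ⟨w, hw, hwu⟩ := hG 1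
    have hx1 : x ∘ ⇑(1 : Equiv.Perm (Fin (n + 1))) = x := by funext j; simp
    rw [hx1] at hwu
    have h0min : IsMin x 0 := ⟨Nat.zero_le _, fun j hj => by
      rw [ps_zero]
      have := hmmin j hj
      linarith⟩
    have hnmin : IsMin x (n + 1) := ⟨le_rfl, fun j hj => by
      rw [h0]
      have := hmmin j hj
      linarith⟩
    have e1 := hwu 0 h0min
    have e2 := hwu (n + 1) hnmin
    omega
  · have hvlt : partialSum x m < 0 := by
      have := hmmin 0 (Nat.zero_le _)
      rw [ps_zero] at this
      exact lt_of_le_of_ne this hv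
    have hmn : m ≤ n := by
      by_contra h
      have : m = n + 1 := by omega
      rw [this, h0] at hvlt; linarith
    obtain ⟨w2, hw2, hwu2⟩ := hG ((finRotate (n + 1)) ^ m)
    set y := x ∘ ⇑((finRotate (n + 1)) ^ m) with hy
    have hform := shift_formula x h0 m
    have hmm : m % (n + 1) = m := Nat.mod_eq_of_lt (by omega)
    have hymin : ∀ j ≤ n + 1, 0 ≤ partialSum y j := by
      intro j hj
      rw [hform j hj, hmm]
      have harg : (m + j) % (n + 1) < n + 1 := Nat.mod_lt _ (by omega)
      have := hmmin ((m + j) % (n + 1)) (by omega)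
      linarith
    have h0y : IsMin y 0 := ⟨Nat.zero_le _, fun j hj => by
      rw [ps_zero]; exact hymin j hj⟩
    have hny : IsMin y (n + 1) := by
      have hval : partialSum y (n + 1) = 0 := by
        rw [hform (n + 1) le_rfl, hmm]
        have : (m + (n + 1)) % (n + 1) = m % (n + 1) := Nat.add_mod_right _ _
        rw [this, hmm]
        ring
      exact ⟨le_rfl, fun j hj => by rw [hval]; exact hymin j hj⟩
    have e1 := hwu2 0 h0y
    have e2 := hwu2 (n + 1) hny
    omega


/-! ### counting infrastructure -/

/-- the tuple `x` with the coordinate `p` removed -/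
def xdrop (x : Fin (n + 1) → ℝ) (p : Fin (n + 1)) : Fin n → ℝ :=
  fun i => x (Equiv.swap 0 p i.succ)

lemma tail_decompose (x : Fin (n + 1) → ℝ) (p : Fin (n + 1)) (σ : Equiv.Perm (Fin n)) :
    Fin.tail (x ∘ ⇑(Equiv.Perm.decomposeFin.symm (p, σ))) = xdrop x p ∘ ⇑σ := by
  funext i
  show x (Equiv.Perm.decomposeFin.symm (p, σ) i.succ) = x (Equiv.swap 0 p (σ i).succ)
  rw [Equiv.Perm.decomposeFin_symm_apply_succ]

lemma head_decompose (x : Fin (n + 1) → ℝ) (p : Fin (n + 1)) (σ : Equiv.Perm (Fin n)) :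
    (x ∘ ⇑(Equiv.Perm.decomposeFin.symm (p, σ))) 0 = x p := by
  show x (Equiv.Perm.decomposeFin.symm (p, σ) 0) = x p
  rw [Equiv.Perm.decomposeFin_symm_apply_zero]

lemma sum_reindex_mulRight {G : Type*} [Group G] [Fintype G] (r : G) (f : G → ℕ) :
    ∑ π : G, f (π * r) = ∑ π : G, f π := by
  simpa using Equiv.sum_comp (Equiv.mulRight r) f

lemma sum_tail (x : Fin (n + 1) → ℝ) (F : (Fin n → ℝ) → ℕ) :
    (∑ π : Equiv.Perm (Fin (n + 1)), F (Fin.tail (x ∘ ⇑π))) =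
    ∑ p : Fin (n + 1), ∑ σ : Equiv.Perm (Fin n), F (xdrop x p ∘ ⇑σ) := by
  calc (∑ π : Equiv.Perm (Fin (n + 1)), F (Fin.tail (x ∘ ⇑π)))
      = ∑ pr : Fin (n + 1) × Equiv.Perm (Fin n),
          F (Fin.tail (x ∘ ⇑(Equiv.Perm.decomposeFin.symm pr))) :=
        (Equiv.sum_comp Equiv.Perm.decomposeFin.symm
          (fun π => F (Fin.tail (x ∘ ⇑π)))).symm
    _ = ∑ p : Fin (n + 1), ∑ σ : Equiv.Perm (Fin n),
          F (Fin.tail (x ∘ ⇑(Equiv.Perm.decomposeFin.symm (p, σ)))) :=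
        Fintype.sum_prod_type _
    _ = _ := by
        refine Finset.sum_congr rfl fun p _ => Finset.sum_congr rfl fun σ _ => ?_
        rw [tail_decompose]

lemma comp_perm_sum {m : ℕ} (z : Fin m → ℝ) (ρ : Equiv.Perm (Fin m)) (F : (Fin m → ℝ) → ℕ) :
    (∑ σ : Equiv.Perm (Fin m), F (z ∘ ⇑σ ∘ ⇑ρ)) =
    ∑ σ : Equiv.Perm (Fin m), F (z ∘ ⇑σ) := by
  rw [← sum_reindex_mulRight ρ (fun σ => F (z ∘ ⇑σ))]
  refine Finset.sum_congr rfl fun σ _ => ?_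
  have : z ∘ ⇑(σ * ρ) = z ∘ ⇑σ ∘ ⇑ρ := by rw [Equiv.Perm.coe_mul]
  rw [this]

lemma init_eq_tail_rev (x : Fin (n + 1) → ℝ) (π : Equiv.Perm (Fin (n + 1))) :
    Fin.init (x ∘ ⇑π)
      = Fin.tail (x ∘ ⇑(π * (Fin.revPerm : Equiv.Perm (Fin (n + 1)))))
          ∘ ⇑(Fin.revPerm : Equiv.Perm (Fin n)) := by
  funext i
  show x (π i.castSucc) = x (π (Fin.revPerm ((Fin.revPerm i).succ)))
  congr 1
  rw [Fin.revPerm_apply, Fin.revPerm_apply, Fin.rev_succ, Fin.rev_rev]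

lemma sum_init (x : Fin (n + 1) → ℝ) (F : (Fin n → ℝ) → ℕ) :
    (∑ π : Equiv.Perm (Fin (n + 1)), F (Fin.init (x ∘ ⇑π))) =
    ∑ p : Fin (n + 1), ∑ σ : Equiv.Perm (Fin n), F (xdrop x p ∘ ⇑σ) := by
  calc (∑ π : Equiv.Perm (Fin (n + 1)), F (Fin.init (x ∘ ⇑π)))
      = ∑ π : Equiv.Perm (Fin (n + 1)),
          F (Fin.tail (x ∘ ⇑(π * (Fin.revPerm : Equiv.Perm (Fin (n + 1)))))
              ∘ ⇑(Fin.revPerm : Equiv.Perm (Fin n))) := by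
        refine Finset.sum_congr rfl fun π _ => ?_
        rw [init_eq_tail_rev]
    _ = ∑ π : Equiv.Perm (Fin (n + 1)),
          F (Fin.tail (x ∘ ⇑π) ∘ ⇑(Fin.revPerm : Equiv.Perm (Fin n))) :=
        sum_reindex_mulRight (Fin.revPerm : Equiv.Perm (Fin (n + 1)))
          (fun π => F (Fin.tail (x ∘ ⇑π) ∘ ⇑(Fin.revPerm : Equiv.Perm (Fin n))))
    _ = ∑ p : Fin (n + 1), ∑ σ : Equiv.Perm (Fin n),
          F (xdrop x p ∘ ⇑σ ∘ ⇑(Fin.revPerm : Equiv.Perm (Fin n))) :=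
        sum_tail x (fun z => F (z ∘ ⇑(Fin.revPerm : Equiv.Perm (Fin n))))
    _ = _ := Finset.sum_congr rfl fun p _ =>
        comp_perm_sum (xdrop x p) (Fin.revPerm : Equiv.Perm (Fin n)) F


/-- Stability of the "unique argmin for all rearrangements" property under
removing one coordinate. -/
lemma xdrop_unique (x : Fin (n + 1) → ℝ)
    (hG : ∀ π : Equiv.Perm (Fin (n + 1)), ∃! i, IsMin (x ∘ ⇑π) i)
    (p : Fin (n + 1)) (σ : Equiv.Perm (Fin n)) :
    ∃! i, IsMin (xdrop x p ∘ ⇑σ) i := by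
  set z := xdrop x p ∘ ⇑σ with hz
  obtain ⟨i0, hi0⟩ := exists_isMin z
  refine ⟨i0, hi0, fun i' hi' => ?_⟩
  by_contra hne
  have key : ∀ i1 i2, i1 < i2 → IsMin z i1 → IsMin z i2 → False := by
    intro i1 i2 hlt hz1 hz2
    set a := x p with ha
    set m := partialSum z i1 with hm
    have hm2 : partialSum z i2 = m := le_antisymm (hz2.2 i1 hz1.1) (hz1.2 i2 hz2.1)
    have hm0 : m ≤ 0 := by
      have := hz1.2 0 (Nat.zero_le _)
      rw [ps_zero] at this
      rw [hm]; linarith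
    set π0 := Equiv.Perm.decomposeFin.symm (p, σ) with hπ0
    set y := x ∘ ⇑π0 with hy
    have hty : Fin.tail y = z := tail_decompose x p σ
    have hy0 : y 0 = a := head_decompose x p σ
    have hps : ∀ t, t ≤ n → partialSum y (t + 1) = a + partialSum z t := by
      intro t htn
      have := ps_tail y t htn
      rw [hty, hy0] at this
      linarith
    by_cases hc : a + m ≤ 0
    · -- insert `a` at the front: minima at `i1+1` and `i2+1`
      have gen : ∀ i, i ≤ n → (∀ j ≤ n, partialSum z i ≤ partialSum z j) →
          IsMin y (i + 1) := by
        intro i hin himin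
        refine ⟨by omega, fun j hj => ?_⟩
        rw [hps i hin]
        have hzi : partialSum z i ≤ m := himin i1 hz1.1
        match j with
        | 0 =>
          rw [ps_zero]; linarith
        | (t + 1) =>
          rw [hps t (by omega)]
          have := himin t (by omega)
          linarith
      obtain ⟨w, hw, hwu⟩ := hG π0
      have e1 := hwu (i1 + 1) (gen i1 hz1.1 hz1.2)
      have e2 := hwu (i2 + 1) (gen i2 hz2.1 hz2.2)
      omega
    · -- insert `a` just after position `i2`: minima at `i1` and `i2`
      push_neg at hc
      have hi2n : i2 ≤ n := hz2.1
      set c := Fin.cycleRange (⟨i2, by omega⟩ : Fin (n + 1)) with hcdef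
      set w := x ∘ ⇑(π0 * c) with hwdef
      have hwy : ∀ j : Fin (n + 1), w j = y (c j) := by
        intro j; simp [hwdef, hy, Equiv.Perm.mul_apply]
      have W1 : ∀ t, t ≤ i2 → partialSum w t = partialSum z t := by
        intro t
        induction t with
        | zero => intro _; rw [ps_zero, ps_zero]
        | succ t ih =>
          intro ht
          have htn1 : t < n + 1 := by omega
          have htn : t < n := by omega
          rw [ps_succ w t htn1, ps_succ z t htn, ih (by omega)]
          congr 1
          rw [hwy]
          have hlt' : (⟨t, htn1⟩ : Fin (n + 1)) < ⟨i2, by omega⟩ := by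
            simp [Fin.lt_def]; omega
          rw [Fin.cycleRange_of_lt hlt']
          have hidx : (⟨t, htn1⟩ : Fin (n + 1)) + 1 = Fin.succ ⟨t, htn⟩ := by
            apply Fin.ext
            rw [Fin.val_add_one, if_neg (by
              intro h
              have : t = n := by simpa [Fin.ext_iff] using h
              omega)]
            rfl
          rw [hidx, ← hty]
          rfl
      have W2 : ∀ t, i2 ≤ t → t ≤ n → partialSum w (t + 1) = a + partialSum z t := by
        intro t
        induction t with
        | zero => intro h0 _; omega
        | succ t ih =>
          intro hle htn
          by_cases hcase : i2 ≤ t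
          · rw [ps_succ w (t + 1) (by omega), ih hcase (by omega),
              ps_succ z t (by omega)]
            have hwz : w ⟨t + 1, by omega⟩ = z ⟨t, by omega⟩ := by
              rw [hwy]
              have hgt : (⟨i2, by omega⟩ : Fin (n + 1)) < ⟨t + 1, by omega⟩ := by
                simp [Fin.lt_def]; omega
              rw [Fin.cycleRange_of_gt hgt, ← hty]
              show y (⟨t + 1, _⟩ : Fin (n + 1)) = y (Fin.succ ⟨t, _⟩)
              congr 1
            rw [hwz]
            ring
          · have hi2t : i2 = t + 1 := by omega
            rw [ps_succ w (t + 1) (by omega), W1 (t + 1) (by omega)]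
            have hwa : w ⟨t + 1, by omega⟩ = a := by
              rw [hwy]
              have : (⟨t + 1, by omega⟩ : Fin (n + 1)) = ⟨i2, by omega⟩ := by
                apply Fin.ext; simp [hi2t]
              rw [this, hcdef, Fin.cycleRange_self, hy0]
            rw [hwa]
            ring
      have minw : ∀ i, i ≤ i2 → (∀ j ≤ n, partialSum z i ≤ partialSum z j) →
          IsMin w i := by
        intro i hii2 himin
        refine ⟨by omega, fun j hj => ?_⟩
        rw [W1 i hii2]
        by_cases hji : j ≤ i2
        · rw [W1 j hji]; exact himin j (by omega)
        · obtain ⟨t, rfl⟩ : ∃ t, j = t + 1 := ⟨j - 1, by omega⟩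
          rw [W2 t (by omega) (by omega)]
          have hzi : partialSum z i ≤ m := himin i1 hz1.1
          have hzt : m ≤ partialSum z t := hz1.2 t (by omega)
          linarith
      obtain ⟨w', hw', hwu'⟩ := hG (π0 * c)
      have e1 := hwu' i1 (minw i1 (le_of_lt hlt) hz1.2)
      have e2 := hwu' i2 (minw i2 le_rfl hz2.2)
      omega
  rcases lt_trichotomy i' i0 with h | h | h
  · exact key _ _ h hi' hi0
  · exact hne h
  · exact key _ _ h hi0 hi'


/-- **Deterministic Sparre Andersen / Feller counting lemma.** -/
lemma SA : ∀ (n : ℕ) (x : Fin n → ℝ),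
    (∀ σ : Equiv.Perm (Fin n), ∃! i, IsMin (x ∘ ⇑σ) i) →
    ∀ k, k ≤ n →
      (∑ σ : Equiv.Perm (Fin n), if IsMin (x ∘ ⇑σ) k then (1 : ℕ) else 0) =
      (∑ σ : Equiv.Perm (Fin n), if npos (x ∘ ⇑σ) = n - k then (1 : ℕ) else 0) := by
  intro n
  induction n with
  | zero =>
    intro x hG k hk
    have hk0 : k = 0 := by omega
    subst hk0
    refine Finset.sum_congr rfl fun σ _ => ?_
    have h1 : IsMin (x ∘ ⇑σ) 0 :=
      ⟨le_rfl, fun j hj => by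
        have hj0 : j = 0 := by omega
        rw [hj0]⟩
    have h2 : npos (x ∘ ⇑σ) = 0 - 0 := by
      unfold npos
      simp
    rw [if_pos h1, if_pos h2]
  | succ n IH =>
    intro x hG k hk
    have hdrop : ∀ (p : Fin (n + 1)) (σ : Equiv.Perm (Fin n)), ∃! i, IsMin (xdrop x p ∘ ⇑σ) i := xdrop_unique x hG
    have hs := total_ne_zero x hG
    have htot : ∀ π : Equiv.Perm (Fin (n + 1)),
        partialSum (x ∘ ⇑π) (n + 1) = partialSum x (n + 1) := fun π => ps_total_comp x π
    rcases lt_or_gt_of_ne hs with hneg | hpos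
    · -- total sum negative
      match k, hk with
      | 0, _ =>
        refine Finset.sum_congr rfl fun π _ => ?_
        rw [if_neg (not_isMin_zero (x ∘ ⇑π) (by rw [htot π]; exact hneg)),
          if_neg (by
            simpa using npos_ne_top (x ∘ ⇑π) (by rw [htot π]; exact hneg))]
      | (k' + 1), hk =>
        have hk'n : k' ≤ n := by omega
        calc (∑ π : Equiv.Perm (Fin (n + 1)), if IsMin (x ∘ ⇑π) (k' + 1) then (1 : ℕ) else 0)
            = ∑ π : Equiv.Perm (Fin (n + 1)),
                if IsMin (Fin.tail (x ∘ ⇑π)) k' then (1 : ℕ) else 0 :=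
              Finset.sum_congr rfl fun π _ => if_congr
                (isMin_tail_iff (x ∘ ⇑π) (by rw [htot π]; exact hneg) k') rfl rfl
          _ = ∑ p : Fin (n + 1), ∑ σ : Equiv.Perm (Fin n),
                if IsMin (xdrop x p ∘ ⇑σ) k' then (1 : ℕ) else 0 :=
              sum_tail x (fun z => if IsMin z k' then (1 : ℕ) else 0)
          _ = ∑ p : Fin (n + 1), ∑ σ : Equiv.Perm (Fin n),
                if npos (xdrop x p ∘ ⇑σ) = n - k' then (1 : ℕ) else 0 :=
              Finset.sum_congr rfl fun p _ => IH (xdrop x p) (hdrop p) k' hk'n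
          _ = ∑ π : Equiv.Perm (Fin (n + 1)),
                if npos (Fin.init (x ∘ ⇑π)) = n - k' then (1 : ℕ) else 0 :=
              (sum_init x (fun z => if npos z = n - k' then (1 : ℕ) else 0)).symm
          _ = ∑ π : Equiv.Perm (Fin (n + 1)),
                if npos (x ∘ ⇑π) = n + 1 - (k' + 1) then (1 : ℕ) else 0 := by
              refine Finset.sum_congr rfl fun π _ => if_congr ?_ rfl rfl
              rw [npos_neg (x ∘ ⇑π) (by rw [htot π]; exact hneg)]
              have : n + 1 - (k' + 1) = n - k' := by omega
              rw [this]
    · -- total sum positive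
      by_cases hktop : k = n + 1
      · subst hktop
        refine Finset.sum_congr rfl fun π _ => ?_
        rw [if_neg (not_isMin_last (x ∘ ⇑π) (by rw [htot π]; exact hpos)),
          if_neg (by
            rw [npos_pos (x ∘ ⇑π) (by rw [htot π]; exact hpos)]
            omega)]
      · have hk'n : k ≤ n := by omega
        calc (∑ π : Equiv.Perm (Fin (n + 1)), if IsMin (x ∘ ⇑π) k then (1 : ℕ) else 0)
            = ∑ π : Equiv.Perm (Fin (n + 1)),
                if IsMin (Fin.init (x ∘ ⇑π)) k then (1 : ℕ) else 0 :=
              Finset.sum_congr rfl fun π _ => if_congr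
                (isMin_init_iff (x ∘ ⇑π) (by rw [htot π]; exact hpos) k) rfl rfl
          _ = ∑ p : Fin (n + 1), ∑ σ : Equiv.Perm (Fin n),
                if IsMin (xdrop x p ∘ ⇑σ) k then (1 : ℕ) else 0 :=
              sum_init x (fun z => if IsMin z k then (1 : ℕ) else 0)
          _ = ∑ p : Fin (n + 1), ∑ σ : Equiv.Perm (Fin n),
                if npos (xdrop x p ∘ ⇑σ) = n - k then (1 : ℕ) else 0 :=
              Finset.sum_congr rfl fun p _ => IH (xdrop x p) (hdrop p) k hk'n
          _ = ∑ π : Equiv.Perm (Fin (n + 1)),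
                if npos (Fin.init (x ∘ ⇑π)) = n - k then (1 : ℕ) else 0 :=
              (sum_init x (fun z => if npos z = n - k then (1 : ℕ) else 0)).symm
          _ = ∑ π : Equiv.Perm (Fin (n + 1)),
                if npos (x ∘ ⇑π) = n + 1 - k then (1 : ℕ) else 0 := by
              refine Finset.sum_congr rfl fun π _ => if_congr ?_ rfl rfl
              rw [npos_pos (x ∘ ⇑π) (by rw [htot π]; exact hpos)]
              omega


/-! ### measurability -/

lemma meas_ps (i : ℕ) : Measurable fun y : Fin n → ℝ => partialSum y i := by
  unfold partialSum
  apply Finset.measurable_sum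
  intro j _
  by_cases h : j < n
  · simp only [dif_pos h]
    exact measurable_pi_apply _
  · simp only [dif_neg h]
    exact measurable_const

lemma measSet_isMin (k : ℕ) : MeasurableSet {y : Fin n → ℝ | IsMin y k} := by
  have hrw : {y : Fin n → ℝ | IsMin y k}
      = {y : Fin n → ℝ | k ≤ n} ∩
        ⋂ j ∈ Set.Iic n, {y : Fin n → ℝ | partialSum y k ≤ partialSum y j} := by
    ext y
    simp only [IsMin, Set.mem_setOf_eq, Set.mem_inter_iff, Set.mem_iInter, Set.mem_Iic]
    try tauto
  rw [hrw]
  refine MeasurableSet.inter (MeasurableSet.const _) ?_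
  exact MeasurableSet.biInter (Set.to_countable _)
    fun j _ => measurableSet_le (meas_ps k) (meas_ps j)

lemma meas_npos : Measurable fun y : Fin n → ℝ => npos y := by
  have hrw : (fun y : Fin n → ℝ => npos y)
      = fun y => ∑ i ∈ Finset.Icc 1 n, if 0 < partialSum y i then 1 else 0 := by
    funext y
    exact Finset.card_filter _ _
  rw [hrw]
  apply Finset.measurable_sum
  intro i _
  exact Measurable.ite (measurableSet_lt measurable_const (meas_ps i))
    measurable_const measurable_const

lemma measSet_unique : MeasurableSet {y : Fin n → ℝ | ∃! i, IsMin y i} := by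
  have hrw : {y : Fin n → ℝ | ∃! i, IsMin y i}
      = ⋃ i ∈ Set.Iic n, ({y : Fin n → ℝ | IsMin y i} ∩
          ⋂ j ∈ Set.Iic n, {y : Fin n → ℝ | IsMin y j → j = i}) := by
    ext y
    simp only [Set.mem_setOf_eq, Set.mem_iUnion, Set.mem_inter_iff, Set.mem_iInter,
      Set.mem_Iic]
    constructor
    · rintro ⟨i, hi, hu⟩
      exact ⟨i, hi.1, hi, fun j _ hj => hu j hj⟩
    · rintro ⟨i, hin, hi, hu⟩
      exact ⟨i, hi, fun j hj => hu j hj.1 hj⟩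
  rw [hrw]
  refine MeasurableSet.biUnion (Set.to_countable _) fun i _ =>
    (measSet_isMin i).inter ?_
  refine MeasurableSet.biInter (Set.to_countable _) fun j _ => ?_
  have : {y : Fin n → ℝ | IsMin y j → j = i}
      = {y : Fin n → ℝ | IsMin y j}ᶜ ∪ {y : Fin n → ℝ | j = i} := by
    ext y
    simp only [Set.mem_setOf_eq, Set.mem_union, Set.mem_compl_iff]
    tauto
  rw [this]
  exact (measSet_isMin j).compl.union (MeasurableSet.const _)

end FellerAux

open FellerAux

/-- **Feller's lemma** (equidistribution of the argmin of an exchangeable walk and the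
number of positive partial sums): if `ξ_1, …, ξ_n` is exchangeable and the minimum of the
partial sums is a.s. attained at a unique index `τ`, then
`P(τ = k) = P(#{i : S_i > 0} = n - k)` for every `k ∈ {0,…,n}`. -/
theorem feller_lemma
    {Ω : Type*} [MeasurableSpace Ω] (μ : Measure Ω) [IsProbabilityMeasure μ]
    (n : ℕ) (ξ : Ω → Fin n → ℝ) (hmeas : Measurable ξ)
    (hexch : ∀ σ : Equiv.Perm (Fin n),
      Measure.map (fun ω => fun j => ξ ω (σ j)) μ = Measure.map ξ μ)
    (huniq : ∀ᵐ ω ∂μ, ∃! i : ℕ, i ≤ n ∧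
      ∀ j ≤ n, partialSum (ξ ω) i ≤ partialSum (ξ ω) j) :
    ∀ k ≤ n,
      μ {ω | sSup {i | i ≤ n ∧ ∀ j ≤ n, partialSum (ξ ω) i ≤ partialSum (ξ ω) j} = k}
        = μ {ω |
            ((Finset.Icc 1 n).filter fun i => 0 < partialSum (ξ ω) i).card = n - k} := by
  intro k hk
  have hmap : ∀ σ : Equiv.Perm (Fin n), Measurable fun ω => fun j => ξ ω (σ j) :=
    fun σ => measurable_pi_lambda _ fun j => (measurable_pi_apply (σ j)).comp hmeas
  -- a.e., all rearrangements have a unique argmin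
  have hae_uniq : ∀ᵐ ω ∂μ, ∀ σ : Equiv.Perm (Fin n),
      ∃! i, IsMin (fun j => ξ ω (σ j)) i := by
    rw [MeasureTheory.ae_all_iff]
    intro σ
    rw [MeasureTheory.ae_iff]
    have hpre : {ω | ¬ ∃! i, IsMin (fun j => ξ ω (σ j)) i}
        = (fun ω => fun j => ξ ω (σ j)) ⁻¹' {y : Fin n → ℝ | ∃! i, IsMin y i}ᶜ := rfl
    rw [hpre, ← Measure.map_apply (hmap σ) measSet_unique.compl, hexch σ,
      Measure.map_apply hmeas measSet_unique.compl]
    have : μ {ω | ¬ ∃! i, IsMin (ξ ω) i} = 0 := by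
      rw [← MeasureTheory.ae_iff]
      exact huniq
    exact this
  -- the two events, as preimages
  set A : Set (Fin n → ℝ) := {y | IsMin y k} with hA
  set B : Set (Fin n → ℝ) := {y | npos y = n - k} with hB
  have hAm : MeasurableSet A := measSet_isMin k
  have hBm : MeasurableSet B := meas_npos (measurableSet_singleton (n - k))
  -- measure of each permuted preimage
  have key : ∀ (C : Set (Fin n → ℝ)), MeasurableSet C → ∀ σ : Equiv.Perm (Fin n),
      μ ((fun ω => fun j => ξ ω (σ j)) ⁻¹' C) = μ (ξ ⁻¹' C) := by
    intro C hC σ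
    rw [← Measure.map_apply (hmap σ) hC, hexch σ, Measure.map_apply hmeas hC]
  -- sum over permutations = integral of the count
  have intC : ∀ (C : Set (Fin n → ℝ)), MeasurableSet C →
      (∑ σ : Equiv.Perm (Fin n), μ ((fun ω => fun j => ξ ω (σ j)) ⁻¹' C))
      = ∫⁻ ω, ∑ σ : Equiv.Perm (Fin n),
          Set.indicator ((fun ω' => fun j => ξ ω' (σ j)) ⁻¹' C) (fun _ => (1 : ℝ≥0∞)) ω ∂μ := by
    intro C hC
    rw [MeasureTheory.lintegral_finset_sum _
      (fun σ _ => measurable_const.indicator ((hmap σ) hC))]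
    exact Finset.sum_congr rfl fun σ _ =>
      (MeasureTheory.lintegral_indicator_one ((hmap σ) hC)).symm
  -- a.e. equality of the two counts
  have hcount : ∀ᵐ ω ∂μ,
      (∑ σ : Equiv.Perm (Fin n),
        Set.indicator ((fun ω' => fun j => ξ ω' (σ j)) ⁻¹' A) (fun _ => (1 : ℝ≥0∞)) ω)
      = ∑ σ : Equiv.Perm (Fin n),
        Set.indicator ((fun ω' => fun j => ξ ω' (σ j)) ⁻¹' B) (fun _ => (1 : ℝ≥0∞)) ω := by
    filter_upwards [hae_uniq] with ω hω
    have hnat : (∑ σ : Equiv.Perm (Fin n), if IsMin ((ξ ω) ∘ ⇑σ) k then (1 : ℕ) else 0)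
        = ∑ σ : Equiv.Perm (Fin n), if npos ((ξ ω) ∘ ⇑σ) = n - k then (1 : ℕ) else 0 :=
      SA n (ξ ω) (fun σ => hω σ) k hk
    have h1 : (∑ σ : Equiv.Perm (Fin n),
        Set.indicator ((fun ω' => fun j => ξ ω' (σ j)) ⁻¹' A) (fun _ => (1 : ℝ≥0∞)) ω)
        = ((∑ σ : Equiv.Perm (Fin n), if IsMin ((ξ ω) ∘ ⇑σ) k then (1 : ℕ) else 0 : ℕ) : ℝ≥0∞) := by
      rw [Nat.cast_sum]
      refine Finset.sum_congr rfl fun σ _ => ?_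
      by_cases h : IsMin ((ξ ω) ∘ ⇑σ) k
      · have hm : ω ∈ ((fun ω' => fun j => ξ ω' (σ j)) ⁻¹' A) := h
        rw [Set.indicator_of_mem hm, if_pos h]
        simp
      · have hm : ω ∉ ((fun ω' => fun j => ξ ω' (σ j)) ⁻¹' A) := h
        rw [Set.indicator_of_notMem hm, if_neg h]
        simp
    have h2 : (∑ σ : Equiv.Perm (Fin n),
        Set.indicator ((fun ω' => fun j => ξ ω' (σ j)) ⁻¹' B) (fun _ => (1 : ℝ≥0∞)) ω)
        = ((∑ σ : Equiv.Perm (Fin n), if npos ((ξ ω) ∘ ⇑σ) = n - k then (1 : ℕ) else 0 : ℕ) : ℝ≥0∞) := by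
      rw [Nat.cast_sum]
      refine Finset.sum_congr rfl fun σ _ => ?_
      by_cases h : npos ((ξ ω) ∘ ⇑σ) = n - k
      · have hm : ω ∈ ((fun ω' => fun j => ξ ω' (σ j)) ⁻¹' B) := h
        rw [Set.indicator_of_mem hm, if_pos h]
        simp
      · have hm : ω ∉ ((fun ω' => fun j => ξ ω' (σ j)) ⁻¹' B) := h
        rw [Set.indicator_of_notMem hm, if_neg h]
        simp
    rw [h1, h2, hnat]
  -- put everything together
  have main : (Fintype.card (Equiv.Perm (Fin n)) : ℝ≥0∞) * μ (ξ ⁻¹' A)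
      = (Fintype.card (Equiv.Perm (Fin n)) : ℝ≥0∞) * μ (ξ ⁻¹' B) := by
    have sumA : (∑ σ : Equiv.Perm (Fin n), μ ((fun ω => fun j => ξ ω (σ j)) ⁻¹' A))
        = (Fintype.card (Equiv.Perm (Fin n)) : ℝ≥0∞) * μ (ξ ⁻¹' A) := by
      rw [Finset.sum_congr rfl (fun σ _ => key A hAm σ), Finset.sum_const,
        Finset.card_univ, nsmul_eq_mul]
    have sumB : (∑ σ : Equiv.Perm (Fin n), μ ((fun ω => fun j => ξ ω (σ j)) ⁻¹' B))
        = (Fintype.card (Equiv.Perm (Fin n)) : ℝ≥0∞) * μ (ξ ⁻¹' B) := by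
      rw [Finset.sum_congr rfl (fun σ _ => key B hBm σ), Finset.sum_const,
        Finset.card_univ, nsmul_eq_mul]
    rw [← sumA, ← sumB, intC A hAm, intC B hBm]
    exact lintegral_congr_ae hcount
  have hABeq : μ (ξ ⁻¹' A) = μ (ξ ⁻¹' B) := by
    have hNne : (Fintype.card (Equiv.Perm (Fin n)) : ℝ≥0∞) ≠ 0 :=
      Nat.cast_ne_zero.mpr Fintype.card_ne_zero
    have hNtop : (Fintype.card (Equiv.Perm (Fin n)) : ℝ≥0∞) ≠ ⊤ :=
      ENNReal.natCast_ne_top _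
    exact (ENNReal.mul_right_inj hNne hNtop).mp main
  -- identify the statement's sets
  have hLHS : μ {ω | sSup {i | i ≤ n ∧
      ∀ j ≤ n, partialSum (ξ ω) i ≤ partialSum (ξ ω) j} = k} = μ (ξ ⁻¹' A) := by
    apply measure_congr
    filter_upwards [huniq] with ω hω
    obtain ⟨i0, hi0, hu⟩ := hω
    have hM : {i | i ≤ n ∧ ∀ j ≤ n, partialSum (ξ ω) i ≤ partialSum (ξ ω) j} = {i0} := by
      ext i
      simp only [Set.mem_setOf_eq, Set.mem_singleton_iff]
      exact ⟨fun h => hu i h, fun h => h ▸ hi0⟩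
    show (sSup {i | i ≤ n ∧ ∀ j ≤ n, partialSum (ξ ω) i ≤ partialSum (ξ ω) j} = k)
        = (ξ ω ∈ A)
    rw [hM, csSup_singleton]
    apply propext
    constructor
    · rintro rfl
      exact hi0
    · intro h
      exact (hu k h).symm
  have hRHS : μ {ω | ((Finset.Icc 1 n).filter fun i => 0 < partialSum (ξ ω) i).card = n - k}
      = μ (ξ ⁻¹' B) := rfl
  rw [hLHS, hRHS]
  exact hABeq
end
end
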